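/- arXiv:2308.12614 — 7 statements merged into one kernel-verified Lean document; each statement's English description precedes it below -/
import Mathlib

section
/- A bipartite graph B is an interval bigraph if and only if its biadjacency matrix is zero-partitionable, i.e., rows and columns can be permuted so that every 0 entry can be colored R or C such that every R has only R-colored 0s to its right and every C has only C-colored 0s below it. -/
/-- `B` is an interval bigraph: each vertex gets a closed real interval, and
`x y` is an edge iff the intervals intersect. -/
def IsIntervalBigraph {n m : ℕ} (E : Fin n → Fin m → Prop) : Prop :=
  ∃ lx rx : Fin n → ℝ, ∃ ly ry : Fin m → ℝ,
    (∀ x, lx x ≤ rx x) ∧ (∀ y, ly y ≤ ry y) ∧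
    ∀ x y, E x y ↔ (lx x ≤ ry y ∧ ly y ≤ rx x)

/-- The biadjacency matrix is zero-partitionable: rows and columns can be permuted
and every 0 colored `R` (`true`) or `C` (`false`) so that every `R` has only
`R`-colored 0s to its right and every `C` has only `C`-colored 0s below it. -/
def ZeroPartitionable {n m : ℕ} (E : Fin n → Fin m → Prop) : Prop :=
  ∃ σ : Equiv.Perm (Fin n), ∃ τ : Equiv.Perm (Fin m), ∃ c : Fin n → Fin m → Bool,
    ∀ i j, ¬ E (σ i) (τ j) →
      (c i j = true → ∀ j', j < j' → ¬ E (σ i) (τ j') ∧ c i j' = true) ∧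
      (c i j = false → ∀ i', i < i' → ¬ E (σ i') (τ j) ∧ c i' j = false)

/-!
If the vertices carry intervals, order rows and columns by decreasing right endpoint and colour a
zero `R` when the column interval lies to the left of the row interval and `C` when it lies to the
right; both colour classes then propagate in the required directions.

Conversely, in a zero-partitioned matrix the `R`-zeros of row `i` are the columns `j ≥ f i` and the
`C`-zeros of column `j` are the rows `i ≥ g j`, so `i j` is an edge iff `i < g j` and `j < f i`,
and no entry satisfies both `j ≥ f i` and `i ≥ g j`. Comparing the left endpoint of row `i` with the
right endpoint of column `j` must then encode `i < g j`, and the other pair `j < f i`. This is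
possible on a two-level scale: a coarse level given by a monotone `P` with `P i ≤ f i` and
`j < P (g j)` (which exists because `g j ≤ i` forces `j < f i`), and a fine level given by the
indices themselves.
-/

theorem IsIntervalBigraph.comp {n m n' m' : ℕ} {E : Fin n → Fin m → Prop}
    (h : IsIntervalBigraph E) (σ : Fin n' → Fin n) (τ : Fin m' → Fin m) :
    IsIntervalBigraph fun i j => E (σ i) (τ j) := by
  obtain ⟨lx, rx, ly, ry, hx, hy, hE⟩ := h
  exact ⟨lx ∘ σ, rx ∘ σ, ly ∘ τ, ry ∘ τ, fun i => hx _, fun j => hy _, fun i j => hE _ _⟩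

theorem isIntervalBigraph_perm_iff {n m : ℕ} (E : Fin n → Fin m → Prop)
    (σ : Equiv.Perm (Fin n)) (τ : Equiv.Perm (Fin m)) :
    (IsIntervalBigraph fun i j => E (σ i) (τ j)) ↔ IsIntervalBigraph E :=
  ⟨fun h => by simpa using h.comp σ.symm τ.symm, fun h => h.comp σ τ⟩

def IsZeroPartition {ι κ : Type*} [LT ι] [LT κ] (E : ι → κ → Prop) (c : ι → κ → Bool) : Prop :=
  ∀ i j, ¬ E i j →
    (c i j = true → ∀ j', j < j' → ¬ E i j' ∧ c i j' = true) ∧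
    (c i j = false → ∀ i', i < i' → ¬ E i' j ∧ c i' j = false)

theorem exists_perm_antitone {α : Type*} [LinearOrder α] {n : ℕ} (f : Fin n → α) :
    ∃ σ : Equiv.Perm (Fin n), Antitone (f ∘ σ) :=
  ⟨Tuple.sort (OrderDual.toDual ∘ f), monotone_toDual_comp_iff.1 (Tuple.monotone_sort _)⟩

theorem isZeroPartition_of_antitone {ι κ α : Type*} [Preorder ι] [Preorder κ] [LinearOrder α]
    {E : ι → κ → Prop} {lx rx : ι → α} {ly ry : κ → α} (hx : ∀ i, lx i ≤ rx i) (hy : ∀ j, ly j ≤ ry j)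
    (hE : ∀ i j, E i j ↔ lx i ≤ ry j ∧ ly j ≤ rx i) (hrx : Antitone rx) (hry : Antitone ry) :
    IsZeroPartition E fun i j => decide (ry j < lx i) := by
  intro i j hij
  simp only [hE, not_and_or, not_le, decide_eq_true_eq, decide_eq_false_iff_not] at hij ⊢
  refine ⟨fun hR j' hj' => ?_, fun hC i' hi' => ?_⟩
  · have hR' : ry j' < lx i := (hry hj'.le).trans_lt hR
    exact ⟨Or.inl hR', hR'⟩
  · have hC' : rx i' < ly j := (hrx hi'.le).trans_lt (hij.resolve_left hC)
    exact ⟨Or.inr hC', not_lt.2 ((hx i').trans (hC'.trans_le (hy j)).le)⟩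

theorem IsIntervalBigraph.zeroPartitionable {n m : ℕ} {E : Fin n → Fin m → Prop}
    (h : IsIntervalBigraph E) : ZeroPartitionable E := by
  obtain ⟨lx, rx, ly, ry, hx, hy, hE⟩ := h
  obtain ⟨σ, hσ⟩ := exists_perm_antitone rx
  obtain ⟨τ, hτ⟩ := exists_perm_antitone ry
  exact ⟨σ, τ, _, isZeroPartition_of_antitone (fun i => hx (σ i)) (fun j => hy (τ j))
    (fun i j => hE (σ i) (τ j)) hσ hτ⟩

theorem exists_threshold_of_monotone {m : ℕ} {P : Fin m → Prop} (hP : Monotone P) :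
    ∃ k : ℕ, ∀ j : Fin m, P j ↔ k ≤ j := by
  classical
  have hex : ∃ k : ℕ, ∀ j : Fin m, k ≤ (j : ℕ) → P j :=
    ⟨m, fun j hj => absurd j.isLt (not_lt.2 hj)⟩
  exact ⟨Nat.find hex, fun j =>
    ⟨fun hj => Nat.find_min' hex fun j' hj' => hP (Fin.le_iff_val_le_val.2 hj') hj,
      Nat.find_spec hex j⟩⟩

theorem exists_monotone_between {n m : ℕ} (f : Fin n → ℕ) (g : Fin m → ℕ)
    (hfg : ∀ (i : Fin n) (j : Fin m), g j ≤ (i : ℕ) → (j : ℕ) < f i) :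
    ∃ P : ℕ → ℕ, Monotone P ∧ (∀ i : Fin n, P i ≤ f i) ∧ ∀ j : Fin m, (j : ℕ) < P (g j) := by
  classical
  refine ⟨fun k => ({j | g j ≤ k} : Finset (Fin m)).sup fun j => (j : ℕ) + 1,
    fun k k' hk => Finset.sup_mono fun j hj => ?_, fun i => Finset.sup_le fun j hj => ?_,
    fun j => Finset.le_sup (f := fun j : Fin m => (j : ℕ) + 1) ?_⟩
  · simp only [Finset.mem_filter, Finset.mem_univ, true_and] at hj ⊢
    exact hj.trans hk
  · exact hfg i j (Finset.mem_filter.1 hj).2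
  · simp

theorem isIntervalBigraph_of_staircase {n m : ℕ} {E : Fin n → Fin m → Prop}
    (f : Fin n → ℕ) (g : Fin m → ℕ)
    (hfg : ∀ (i : Fin n) (j : Fin m), g j ≤ (i : ℕ) → (j : ℕ) < f i)
    (hE : ∀ i j, E i j ↔ (i : ℕ) < g j ∧ (j : ℕ) < f i) : IsIntervalBigraph E := by
  obtain ⟨P, hP, hPf, hPg⟩ := exists_monotone_between f g hfg
  -- the coarse unit `N` exceeds every fine offset, which lies in `[-1, n + 1]`
  set N : ℝ := n + 2
  have scale_le {a b : ℕ} (h : a ≤ b) : N * a ≤ N * b := by gcongr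
  have scale_lt {a b : ℕ} (h : a < b) : N * a + N ≤ N * b := by
    have := scale_le (Nat.succ_le_of_lt h)
    push_cast at this
    linarith
  refine ⟨fun i => N * P i + i, fun i => N * f i + n, fun j => N * j + n + 1,
    fun j => N * P (g j) + g j - 1, fun i => ?_, fun j => ?_, fun i j => ?_⟩
  · have : (i : ℝ) ≤ n := by exact_mod_cast i.isLt.le
    linarith [scale_le (hPf i)]
  · linarith [scale_lt (hPg j), (g j).cast_nonneg (α := ℝ)]
  · dsimp only
    rw [hE]
    refine and_congr ⟨fun h => ?_, fun h => ?_⟩ ⟨fun h => ?_, fun h => ?_⟩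
    · have : ((i + 1 : ℕ) : ℝ) ≤ g j := by exact_mod_cast h
      push_cast at this
      linarith [scale_le (hP h.le)]
    · by_contra! hgi
      have : (g j : ℝ) ≤ i := by exact_mod_cast hgi
      linarith [scale_le (hP hgi)]
    · linarith [scale_lt h]
    · by_contra! hfj
      linarith [scale_le hfj]

theorem IsZeroPartition.isIntervalBigraph {n m : ℕ} {E : Fin n → Fin m → Prop}
    {c : Fin n → Fin m → Bool} (H : IsZeroPartition E c) : IsIntervalBigraph E := by
  have hR : ∀ i, Monotone fun j => ¬ E i j ∧ c i j = true := fun i =>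
    monotone_iff_forall_lt.2 fun j j' hj h => (H i j h.1).1 h.2 j' hj
  have hC : ∀ j, Monotone fun i => ¬ E i j ∧ c i j = false := fun j =>
    monotone_iff_forall_lt.2 fun i i' hi h => (H i j h.1).2 h.2 i' hi
  choose f hf using fun i => exists_threshold_of_monotone (hR i)
  choose g hg using fun j => exists_threshold_of_monotone (hC j)
  refine isIntervalBigraph_of_staircase f g (fun i j hij => ?_) (fun i j => ?_)
  · have hCij := (hg j i).2 hij
    by_contra! hfj
    exact Bool.false_ne_true (hCij.2.symm.trans ((hf i j).2 hfj).2)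
  · rw [← not_le, ← not_le, ← hg, ← hf]
    cases c i j <;> tauto

theorem interval_bigraph_iff_zero_partitionable {n m : ℕ} (E : Fin n → Fin m → Prop) :
    IsIntervalBigraph E ↔ ZeroPartitionable E := by
  refine ⟨IsIntervalBigraph.zeroPartitionable, ?_⟩
  rintro ⟨σ, τ, c, H⟩
  exact (isIntervalBigraph_perm_iff E σ τ).1 (IsZeroPartition.isIntervalBigraph H)
end

section
/- A bipartite graph B is an interval bigraph if and only if B is the intersection of two Ferrers bigraphs whose union is the complete bipartite graph on the same vertex classes. -/
/-- A Ferrers bigraph: the neighborhoods of the vertices of `X` are linearly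
ordered by inclusion. -/
def IsFerrers {n m : ℕ} (F : Fin n → Fin m → Prop) : Prop :=
  ∀ x₁ x₂ : Fin n, (∀ y, F x₁ y → F x₂ y) ∨ (∀ y, F x₂ y → F x₁ y)


/-!
Converse: with `a x` the number of `F₁`-non-neighbours of `x`, give `x` the interval from
`(m + 1) * a x` to `(m + 1) * M x + deg_{F₂} x`, where `M x` is the largest `a x'` over the `x'`
whose `F₁`-non-neighbours are all `F₂`-neighbours of `x`; a complete union makes `x` one of these
`x'`, so `a x ≤ M x`. Nested `F₁`-neighbourhoods make `a` strictly larger on the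
`F₁`-non-neighbours of any `y` than on its `F₁`-neighbours, and nested `F₂`-neighbourhoods make the
right ends of the `F₂`-neighbours of `y` strictly larger than those of its `F₂`-non-neighbours
(the summand `deg_{F₂} x ≤ m` breaks ties of `M`). So `y` can be given the right end just below
the left ends of its `F₁`-non-neighbours and the left end just above the right ends of its
`F₂`-non-neighbours.
-/

open Finset

lemma card_filter_lt_card_filter {β : Type*} [Fintype β] {p q : β → Prop}
    [DecidablePred p] [DecidablePred q] (hpq : ∀ y, p y → q y) {y₀ : β}
    (hq : q y₀) (hp : ¬ p y₀) : #{y | p y} < #{y | q y} :=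
  card_lt_card <| (ssubset_iff_of_subset fun y ↦ by simpa using hpq y).2
    ⟨y₀, by simpa using hq, by simpa using hp⟩

section Ferrers

variable {n m : ℕ}

lemma isFerrers_le {α : Type*} [LinearOrder α] (a : Fin n → α) (b : Fin m → α) :
    IsFerrers fun x y ↦ a x ≤ b y := fun x₁ x₂ ↦
  (le_total (a x₂) (a x₁)).imp (fun h _ ↦ h.trans) (fun h _ ↦ h.trans)

lemma isFerrers_ge {α : Type*} [LinearOrder α] (a : Fin n → α) (b : Fin m → α) :
    IsFerrers fun x y ↦ b y ≤ a x := fun x₁ x₂ ↦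
  (le_total (a x₁) (a x₂)).imp (fun h _ hy ↦ hy.trans h) (fun h _ hy ↦ hy.trans h)

variable {F : Fin n → Fin m → Prop}

lemma IsFerrers.imp_of_not (hF : IsFerrers F) {x x' : Fin n} {y : Fin m} (hx : F x y)
    (hx' : ¬ F x' y) (y' : Fin m) : F x' y' → F x y' :=
  (hF x x').resolve_left (fun h ↦ hx' (h y hx)) y'

open scoped Classical in
lemma IsFerrers.card_lt (hF : IsFerrers F) {x x' : Fin n} {y : Fin m} (hx : F x y)
    (hx' : ¬ F x' y) : #{y | F x' y} < #{y | F x y} :=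
  card_filter_lt_card_filter (hF.imp_of_not hx hx') hx hx'

open scoped Classical in
noncomputable def codeg (F : Fin n → Fin m → Prop) (x : Fin n) : ℕ := #{y | ¬ F x y}

lemma IsFerrers.codeg_lt (hF : IsFerrers F) {x x' : Fin n} {y : Fin m} (hx : F x y)
    (hx' : ¬ F x' y) : codeg F x < codeg F x' := by
  classical
  exact card_filter_lt_card_filter (fun y' ↦ mt (hF.imp_of_not hx hx' y')) hx' (not_not.2 hx)

lemma codeg_pos {x : Fin n} {y : Fin m} (hx : ¬ F x y) : 0 < codeg F x := by
  classical
  exact card_pos.2 ⟨y, by simpa using hx⟩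

end Ferrers

section Construction

open scoped Classical

variable {n m : ℕ} (F₁ F₂ : Fin n → Fin m → Prop)

noncomputable def leftEnd (x : Fin n) : ℕ := (m + 1) * codeg F₁ x

noncomputable def rightEnd (x : Fin n) : ℕ :=
  (m + 1) * ({x' | ∀ y, ¬ F₂ x y → F₁ x' y} : Finset _).sup (codeg F₁) + #{y | F₂ x y}

noncomputable def rightEndY (y : Fin m) : ℕ :=
  (m + 1) * ({x | F₁ x y} : Finset _).sup (codeg F₁) + m

noncomputable def leftEndY (y : Fin m) : ℕ :=
  ({x | ¬ F₂ x y} : Finset _).sup fun x ↦ rightEnd F₁ F₂ x + 1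

variable {F₁ F₂}

lemma leftEnd_le_rightEnd (hU : ∀ x y, F₁ x y ∨ F₂ x y) (x : Fin n) :
    leftEnd F₁ x ≤ rightEnd F₁ F₂ x := by
  have hx : x ∈ ({x' | ∀ y, ¬ F₂ x y → F₁ x' y} : Finset _) := by
    simpa using fun y ↦ (hU x y).resolve_right
  have := le_sup (f := codeg F₁) hx
  unfold leftEnd rightEnd
  nlinarith

lemma leftEndY_le_rightEndY (y : Fin m) : leftEndY F₁ F₂ y ≤ rightEndY F₁ y := by
  refine Finset.sup_le fun x hx ↦ ?_
  simp only [mem_filter, mem_univ, true_and] at hx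
  have hsup : ({x' | ∀ y, ¬ F₂ x y → F₁ x' y} : Finset _).sup (codeg F₁)
      ≤ ({x | F₁ x y} : Finset _).sup (codeg F₁) :=
    sup_mono fun x' hx' ↦ by simp_all
  have hdeg : #{y | F₂ x y} < m :=
    (card_lt_univ_of_notMem (x := y) (by simpa using hx)).trans_eq (Fintype.card_fin m)
  unfold rightEnd rightEndY
  nlinarith

lemma le_rightEndY_iff (hF₁ : IsFerrers F₁) (x : Fin n) (y : Fin m) :
    F₁ x y ↔ leftEnd F₁ x ≤ rightEndY F₁ y := by
  unfold leftEnd rightEndY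
  constructor
  · intro h
    have := le_sup (s := {x | F₁ x y}) (f := codeg F₁) (by simpa using h)
    nlinarith
  · intro h
    by_contra hx
    have : ({x | F₁ x y} : Finset _).sup (codeg F₁) < codeg F₁ x :=
      (Finset.sup_lt_iff (codeg_pos hx)).2 fun x' hx' ↦ hF₁.codeg_lt (by simpa using hx') hx
    nlinarith

lemma rightEnd_lt_rightEnd (hF₂ : IsFerrers F₂) {x x' : Fin n} {y : Fin m}
    (hx : F₂ x y) (hx' : ¬ F₂ x' y) : rightEnd F₁ F₂ x' < rightEnd F₁ F₂ x := by
  have hsup : ({x'' | ∀ y, ¬ F₂ x' y → F₁ x'' y} : Finset _).sup (codeg F₁)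
      ≤ ({x'' | ∀ y, ¬ F₂ x y → F₁ x'' y} : Finset _).sup (codeg F₁) :=
    sup_mono fun x'' hx'' ↦ by
      simp only [mem_filter, mem_univ, true_and] at hx'' ⊢
      exact fun y' hy' ↦ hx'' y' (mt (hF₂.imp_of_not hx hx' y') hy')
  have := hF₂.card_lt hx hx'
  unfold rightEnd
  nlinarith

lemma leftEndY_le_iff (hF₂ : IsFerrers F₂) (x : Fin n) (y : Fin m) :
    F₂ x y ↔ leftEndY F₁ F₂ y ≤ rightEnd F₁ F₂ x := by
  constructor
  · intro h
    exact Finset.sup_le fun x' hx' ↦ rightEnd_lt_rightEnd hF₂ h (by simpa using hx')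
  · intro h
    by_contra hx
    have := le_sup (s := {x | ¬ F₂ x y}) (f := fun x ↦ rightEnd F₁ F₂ x + 1)
      (by simpa using hx)
    unfold leftEndY at h
    omega

lemma isIntervalBigraph_of_isFerrers (hF₁ : IsFerrers F₁) (hF₂ : IsFerrers F₂)
    (hU : ∀ x y, F₁ x y ∨ F₂ x y) : IsIntervalBigraph fun x y ↦ F₁ x y ∧ F₂ x y :=
  ⟨fun x ↦ (leftEnd F₁ x : ℝ), fun x ↦ (rightEnd F₁ F₂ x : ℝ),
    fun y ↦ (leftEndY F₁ F₂ y : ℝ), fun y ↦ (rightEndY F₁ y : ℝ),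
    fun x ↦ Nat.cast_le.2 (leftEnd_le_rightEnd hU x),
    fun y ↦ Nat.cast_le.2 (leftEndY_le_rightEndY y),
    fun x y ↦ by
      simp only [Nat.cast_le]
      exact and_congr (le_rightEndY_iff hF₁ x y) (leftEndY_le_iff hF₂ x y)⟩

end Construction

theorem interval_bigraph_iff_intersection_of_two_ferrers {n m : ℕ}
    (E : Fin n → Fin m → Prop) :
    IsIntervalBigraph E ↔
      ∃ F₁ F₂ : Fin n → Fin m → Prop, IsFerrers F₁ ∧ IsFerrers F₂ ∧
        (∀ x y, E x y ↔ F₁ x y ∧ F₂ x y) ∧ (∀ x y, F₁ x y ∨ F₂ x y) := by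
  constructor
  · rintro ⟨lx, rx, ly, ry, hx, hy, hE⟩
    refine ⟨fun x y ↦ lx x ≤ ry y, fun x y ↦ ly y ≤ rx x, isFerrers_le lx ry,
      isFerrers_ge rx ly, hE, fun x y ↦ ?_⟩
    exact (le_total (lx x) (ry y)).imp_right fun h ↦ (hy y).trans (h.trans (hx x))
  · rintro ⟨F₁, F₂, hF₁, hF₂, hE, hU⟩
    obtain ⟨lx, rx, ly, ry, hx, hy, hI⟩ := isIntervalBigraph_of_isFerrers hF₁ hF₂ hU
    exact ⟨lx, rx, ly, ry, hx, hy, fun x y ↦ (hE x y).trans (hI x y)⟩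
end

section
/- If a bipartite graph B = (X, Y, E) admits an ordering x_1,...,x_n of X and y_1,...,y_m of Y such that in the resulting biadjacency matrix no 0 entry has a 1 both below it and to its right, then assigning to x_i the pair (i, k_i) where k_i is the largest column index with entry 1 in row i (and symmetrically for columns) yields a signed-interval representation of B. -/
/-!
Two pairs are signed-interval adjacent exactly when `l(y) ≤ r(x)` and `l(x) ≤ r(y)`: these two
inequalities already rule out that both intervals are negative. In a stair-free matrix a 0 entry
`(i, j)` has only 0s to its right or only 0s below it, so it lies beyond the last 1 of its row or
of its column; hence `E i j` holds iff `j ≤ k i` and `i ≤ c j`, which is the adjacency condition.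
-/

/-- The signed-interval adjacency condition for pairs `(lu, ru)` and `(lv, rv)`:
both intervals positive and intersecting, or the negative interval of one contained
in the positive interval of the other. -/
def SIAdj (lu ru lv rv : ℝ) : Prop :=
  (lu ≤ ru ∧ lv ≤ rv ∧ lu ≤ rv ∧ lv ≤ ru) ∨
  (ru < lu ∧ lv ≤ rv ∧ lv ≤ ru ∧ lu ≤ rv) ∨
  (rv < lv ∧ lu ≤ ru ∧ lu ≤ rv ∧ lv ≤ ru)

theorem siAdj_iff {lu ru lv rv : ℝ} : SIAdj lu ru lv rv ↔ lv ≤ ru ∧ lu ≤ rv := by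
  unfold SIAdj
  constructor
  · rintro (⟨-, -, h₁, h₂⟩ | ⟨-, -, h₁, h₂⟩ | ⟨-, -, h₁, h₂⟩)
    exacts [⟨h₂, h₁⟩, ⟨h₁, h₂⟩, ⟨h₂, h₁⟩]
  · rintro ⟨h₁, h₂⟩
    rcases le_or_gt lu ru with hu | hu <;> rcases le_or_gt lv rv with hv | hv
    · exact Or.inl ⟨hu, hv, h₂, h₁⟩
    · exact Or.inr (Or.inr ⟨hv, hu, h₂, h₁⟩)
    · exact Or.inr (Or.inl ⟨hu, hv, h₁, h₂⟩)
    · linarith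

section StairFree

variable {α β : Type*} [LinearOrder α] [LinearOrder β]

def StairFree (E : α → β → Prop) : Prop :=
  ∀ i j, ¬ E i j → (∀ j', j < j' → ¬ E i j') ∨ (∀ i', i < i' → ¬ E i' j)

theorem StairFree.rel_iff_le_rowMax_and_le_colMax {E : α → β → Prop} (hE : StairFree E)
    {k : α → β} (hk : ∀ i, IsGreatest {j | E i j} (k i))
    {c : β → α} (hc : ∀ j, IsGreatest {i | E i j} (c j)) (i : α) (j : β) :
    E i j ↔ j ≤ k i ∧ i ≤ c j := by
  refine ⟨fun hij => ⟨(hk i).2 hij, (hc j).2 hij⟩, fun ⟨hjk, hic⟩ => ?_⟩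
  by_contra hij
  rcases hE i j hij with hrow | hcol
  · exact hrow (k i) (hjk.lt_of_ne fun h => hij (h ▸ (hk i).1)) (hk i).1
  · exact hcol (c j) (hic.lt_of_ne fun h => hij (h ▸ (hc j).1)) (hc j).1

end StairFree

/-- If the biadjacency matrix (in the given orderings of `X` and `Y`) has no 0 entry
with a 1 both below it and to its right, then assigning to the `i`-th row vertex the
pair `(i, k i)` where `k i` is the largest column index carrying a 1 in row `i`
(and symmetrically, to the `j`-th column vertex the pair `(j, c j)`) yields a
signed-interval representation of `B`. -/
theorem stair_free_gives_signed_interval_representation {n m : ℕ}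
    (E : Fin n → Fin m → Prop)
    (h : ∀ i j, ¬ E i j →
      (∀ j', j < j' → ¬ E i j') ∨ (∀ i', i < i' → ¬ E i' j))
    (k : Fin n → Fin m) (hk : ∀ i, E i (k i) ∧ ∀ j, E i j → j ≤ k i)
    (c : Fin m → Fin n) (hc : ∀ j, E (c j) j ∧ ∀ i, E i j → i ≤ c j) :
    ∀ i j, E i j ↔
      SIAdj ((i : ℕ) : ℝ) ((k i : ℕ) : ℝ) ((j : ℕ) : ℝ) ((c j : ℕ) : ℝ) := by
  intro i j
  rw [siAdj_iff, Nat.cast_le, Nat.cast_le, Fin.val_fin_le, Fin.val_fin_le]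
  exact StairFree.rel_iff_le_rowMax_and_le_colMax h (fun i => hk i) (fun j => hc j) i j
end

section
/- A finite simple graph G (with loops allowed, where a vertex with an assigned positive interval has a loop) is a signed-interval graph if and only if its adjacency matrix, with diagonal entries recording which vertices get positive intervals, is of Ferrers dimension at most 2, i.e., the vertices can be simultaneously ordered (same order for rows and columns) so that no 0 entry has a 1 both below it and to its right. -/
/-!
Two vertices of a signed-interval representation are adjacent exactly when `l u ≤ r v` and
`l v ≤ r u`: for two negative intervals these inequalities would give the cycle
`l u ≤ r v < l v ≤ r u < l u`.

Order the vertices by left endpoint. A 0 entry `(i, j)` then means `r j < l i` or `r i < l j`.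
The first makes the column below it zero and the second makes the row to its right zero.

Conversely, suppose a matrix has no 1 both below and to the right of any 0. Then entry `(u, v)`
is 1 exactly when row `u` has a 1 at or to the right of column `v` and column `v` has a 1 at or
below row `u`. If the matrix is symmetric, set `l v = v + 1` and let `r i` be one more than the
last column with a 1 in row `i`. These two conditions then read `l v ≤ r u` and `l u ≤ r v`.
-/

open Finset

/-- Signed-interval adjacency for a graph: vertices `u, v` (possibly equal) are
adjacent iff their positive intervals intersect, or the negative interval of one is
contained in the positive interval of the other.  Note `SIGAdj l r v v` holds iff
`v` carries a positive interval, so loops record positivity. -/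
def SIGAdj {V : Type*} (l r : V → ℝ) (u v : V) : Prop :=
  (l u ≤ r u ∧ l v ≤ r v ∧ l u ≤ r v ∧ l v ≤ r u) ∨
  (r u < l u ∧ l v ≤ r v ∧ l v ≤ r u ∧ l u ≤ r v) ∨
  (r v < l v ∧ l u ≤ r u ∧ l u ≤ r v ∧ l v ≤ r u)

def IsStairFree {α : Type*} [Preorder α] (B : α → α → Prop) : Prop :=
  ∀ i j, ¬ B i j → (∀ j', j < j' → ¬ B i j') ∨ (∀ i', i < i' → ¬ B i' j)

lemma sigAdj_iff {V : Type*} (l r : V → ℝ) (u v : V) :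
    SIGAdj l r u v ↔ l u ≤ r v ∧ l v ≤ r u := by
  unfold SIGAdj
  constructor
  · rintro (⟨-, -, h₁, h₂⟩ | ⟨-, -, h₂, h₁⟩ | ⟨-, -, h₁, h₂⟩) <;> exact ⟨h₁, h₂⟩
  · rintro ⟨h₁, h₂⟩
    by_cases hu : l u ≤ r u <;> by_cases hv : l v ≤ r v
    · exact Or.inl ⟨hu, hv, h₁, h₂⟩
    · exact Or.inr (Or.inr ⟨not_le.1 hv, hu, h₁, h₂⟩)
    · exact Or.inr (Or.inl ⟨not_le.1 hu, hv, h₂, h₁⟩)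
    · rw [not_le] at hu hv
      linarith

lemma isStairFree_sigAdj {α : Type*} [Preorder α] {l : α → ℝ} (hl : Monotone l) (r : α → ℝ) :
    IsStairFree (SIGAdj l r) := by
  intro i j hij
  by_contra! ⟨⟨j', hjj', hij'⟩, ⟨i', hii', hi'j⟩⟩
  rw [sigAdj_iff] at hij hij' hi'j
  exact hij ⟨(hl hii'.le).trans hi'j.1, (hl hjj'.le).trans hij'.2⟩

lemma IsStairFree.iff_exists_right_and_exists_below {α : Type*} [PartialOrder α]
    {B : α → α → Prop} (hB : IsStairFree B) (u v : α) :
    B u v ↔ (∃ j, B u j ∧ v ≤ j) ∧ (∃ i, B i v ∧ u ≤ i) := by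
  refine ⟨fun h => ⟨⟨v, h, le_rfl⟩, ⟨u, h, le_rfl⟩⟩, ?_⟩
  rintro ⟨⟨j, hj, hvj⟩, ⟨i, hi, hui⟩⟩
  by_contra huv
  rcases hB u v huv with hrow | hcol
  · exact hrow j (hvj.lt_of_ne (by rintro rfl; exact huv hj)) hj
  · exact hcol i (hui.lt_of_ne (by rintro rfl; exact huv hi)) hi

lemma exists_lt_iff_exists_rel_le {n : ℕ} (B : Fin n → Fin n → Prop) :
    ∃ reach : Fin n → ℕ, ∀ i (v : Fin n), (v : ℕ) < reach i ↔ ∃ j, B i j ∧ v ≤ j := by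
  classical
  refine ⟨fun i => (univ.filter (B i)).sup fun j => (j : ℕ) + 1, fun i v => ?_⟩
  simp only [Finset.lt_sup_iff, mem_filter, mem_univ, true_and, Nat.lt_add_one_iff, Fin.le_def]

lemma exists_sigAdj_iff_of_isStairFree {n : ℕ} {B : Fin n → Fin n → Prop}
    (hsym : ∀ u v, B u v → B v u) (hB : IsStairFree B) :
    ∃ l r : Fin n → ℝ, ∀ u v, B u v ↔ SIGAdj l r u v := by
  obtain ⟨reach, hreach⟩ := exists_lt_iff_exists_rel_le B
  refine ⟨fun v => (v : ℕ) + 1, fun i => reach i, fun u v => ?_⟩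
  have hle (i w : Fin n) : ((w : ℕ) : ℝ) + 1 ≤ reach i ↔ ∃ j, B i j ∧ w ≤ j := by
    rw [← hreach]; exact_mod_cast Nat.add_one_le_iff
  have hcol : (∃ i, B i v ∧ u ≤ i) ↔ ∃ j, B v j ∧ u ≤ j :=
    exists_congr fun _ => and_congr_left' ⟨hsym _ _, hsym _ _⟩
  rw [sigAdj_iff, hle, hle, hB.iff_exists_right_and_exists_below, hcol, and_comm]

/-- A finite graph (loops allowed, a loop at `v` meaning `v` gets a positive
interval) is a signed-interval graph iff its adjacency matrix is of Ferrers
dimension at most 2 in the symmetric sense: the vertices can be simultaneously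
ordered (same order for rows and columns) so that no 0 entry has a 1 both below it
and to its right. -/
theorem signed_interval_graph_iff_symmetric_stair_free {n : ℕ}
    (A : Fin n → Fin n → Prop) (hsym : ∀ u v, A u v → A v u) :
    (∃ l r : Fin n → ℝ, ∀ u v, A u v ↔ SIGAdj l r u v) ↔
    (∃ σ : Equiv.Perm (Fin n), ∀ i j, ¬ A (σ i) (σ j) →
      (∀ j', j < j' → ¬ A (σ i) (σ j')) ∨ (∀ i', i < i' → ¬ A (σ i') (σ j))) := by
  constructor
  · rintro ⟨l, r, hA⟩
    have hsorted : (fun i j => A (Tuple.sort l i) (Tuple.sort l j)) =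
        SIGAdj (l ∘ Tuple.sort l) (r ∘ Tuple.sort l) :=
      funext₂ fun i j => propext (hA _ _)
    refine ⟨Tuple.sort l, show IsStairFree _ from ?_⟩
    rw [hsorted]
    exact isStairFree_sigAdj (Tuple.monotone_sort l) _
  · rintro ⟨σ, hσ⟩
    obtain ⟨l, r, hlr⟩ := exists_sigAdj_iff_of_isStairFree
      (B := fun i j => A (σ i) (σ j)) (fun _ _ => hsym _ _) hσ
    refine ⟨l ∘ σ.symm, r ∘ σ.symm, fun u v => ?_⟩
    have := hlr (σ.symm u) (σ.symm v)
    rw [σ.apply_symm_apply, σ.apply_symm_apply] at this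
    exact this
end

section
/- A graph G is a co-TT graph if and only if to each vertex v one can assign positive real numbers a_v and b_v such that xy is an edge if and only if a_x ≤ b_y and a_y ≤ b_x. -/
/-!
Writing `a = w` and `b = t - w`, the inequality `min (t x) (t y) < w x + w y` says exactly that
`b x < a y` or `b y < a x`, so non-adjacency in a threshold tolerance graph is the negation of the
pair condition. The only obstruction is positivity of `b`: a vertex with `b x ≤ 0` is isolated, and
raising `b x` to a common `ε` below every `a y` keeps it isolated.
-/

open Filter Topology

/-- `G` is a threshold tolerance graph: each vertex has a positive weight and a
positive tolerance, and `u v` is an edge iff `w u + w v > min (t u) (t v)`. -/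
def IsThresholdTolerance {V : Type*} (G : SimpleGraph V) : Prop :=
  ∃ w t : V → ℝ, (∀ v, 0 < w v) ∧ (∀ v, 0 < t v) ∧
    ∀ u v, u ≠ v → (G.Adj u v ↔ min (t u) (t v) < w u + w v)

theorem exists_pos_forall_lt_of_finite {ι : Type*} [Finite ι] {a : ι → ℝ} (ha : ∀ i, 0 < a i) :
    ∃ ε, 0 < ε ∧ ∀ i, ε < a i :=
  ((eventually_mem_nhdsWithin : ∀ᶠ ε : ℝ in 𝓝[>] 0, ε ∈ Set.Ioi 0).and
    (eventually_all.2 fun i => nhdsWithin_le_nhds (eventually_lt_nhds (ha i)))).exists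

theorem exists_pos_forall_le_iff {ι κ : Type*} [Finite ι] {a : ι → ℝ} (ha : ∀ i, 0 < a i)
    (b : κ → ℝ) : ∃ b' : κ → ℝ, (∀ j, 0 < b' j) ∧ ∀ i j, (a i ≤ b' j ↔ a i ≤ b j) := by
  obtain ⟨ε, hε, hεa⟩ := exists_pos_forall_lt_of_finite ha
  refine ⟨fun j => max (b j) ε, fun j => hε.trans_le (le_max_right _ _), fun i j => ?_⟩
  simp only [le_max_iff, (hεa i).not_ge, or_false]

theorem min_lt_add_iff_sub_lt_or_sub_lt (t₁ t₂ w₁ w₂ : ℝ) :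
    min t₁ t₂ < w₁ + w₂ ↔ t₂ - w₂ < w₁ ∨ t₁ - w₁ < w₂ := by
  rw [min_lt_iff, sub_lt_iff_lt_add, sub_lt_iff_lt_add', or_comm]

theorem SimpleGraph.compl_adj_iff_min_lt_add_iff {V : Type*} (G : SimpleGraph V) (w t : V → ℝ) :
    (∀ u v, u ≠ v → (Gᶜ.Adj u v ↔ min (t u) (t v) < w u + w v)) ↔
      ∀ u v, u ≠ v → (G.Adj u v ↔ w u ≤ t v - w v ∧ w v ≤ t u - w u) := by
  refine forall₂_congr fun u v => forall_congr' fun huv => ?_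
  rw [compl_adj, min_lt_add_iff_sub_lt_or_sub_lt, ← not_le, ← not_le, ← not_and_or,
    and_iff_right huv, not_iff_not]

/-- A graph is co-TT (the complement of a threshold tolerance graph) iff one can
assign positive reals `a v, b v` to each vertex so that `x y` is an edge iff
`a x ≤ b y` and `a y ≤ b x`. -/
theorem coTT_iff_positive_pair_assignment {V : Type*} [Fintype V] (G : SimpleGraph V) :
    IsThresholdTolerance Gᶜ ↔
      ∃ a b : V → ℝ, (∀ v, 0 < a v) ∧ (∀ v, 0 < b v) ∧
        ∀ x y, x ≠ y → (G.Adj x y ↔ a x ≤ b y ∧ a y ≤ b x) := by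
  constructor
  · rintro ⟨w, t, hw, -, h⟩
    rw [G.compl_adj_iff_min_lt_add_iff] at h
    obtain ⟨b, hb, hwb⟩ := exists_pos_forall_le_iff hw (t - w)
    exact ⟨w, b, hw, hb, fun x y hxy => by rw [h x y hxy, hwb, hwb, Pi.sub_apply, Pi.sub_apply]⟩
  · rintro ⟨a, b, ha, hb, h⟩
    refine ⟨a, a + b, ha, fun v => add_pos (ha v) (hb v), ?_⟩
    rw [G.compl_adj_iff_min_lt_add_iff]
    simpa only [Pi.add_apply, add_sub_cancel_left] using h
end

section
/- A graph G is a split graph if and only if G contains no induced subgraph isomorphic to 2K_2, C_4, or C_5. -/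
/-- A split graph: the vertex set partitions into a clique and an independent set. -/
def IsSplit {V : Type*} (G : SimpleGraph V) : Prop :=
  ∃ K S : Set V, K ∪ S = Set.univ ∧ K ∩ S = ∅ ∧
    G.IsClique K ∧ ∀ u ∈ S, ∀ v ∈ S, ¬ G.Adj u v

/-- `G` contains an induced `2K₂`: four distinct vertices whose only edges among
them are `f 0 — f 1` and `f 2 — f 3`. -/
def HasInducedTwoKTwo {V : Type*} (G : SimpleGraph V) : Prop :=
  ∃ f : Fin 4 → V, Function.Injective f ∧
    ∀ i j : Fin 4, G.Adj (f i) (f j) ↔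
      ((i = 0 ∧ j = 1) ∨ (i = 1 ∧ j = 0) ∨ (i = 2 ∧ j = 3) ∨ (i = 3 ∧ j = 2))

/-- `G` contains an induced cycle `C_n`. -/
def HasInducedCycle {V : Type*} (G : SimpleGraph V) (n : ℕ) : Prop :=
  ∃ f : ZMod n → V, Function.Injective f ∧
    ∀ i j : ZMod n, G.Adj (f i) (f j) ↔ (j = i + 1 ∨ i = j + 1)

/-!
In a split graph every edge has an end on the clique side and every non-edge an end on the
independent side; no two-colouring of the vertices of `2K₂`, `C₄` or `C₅` has both properties.

Conversely, let `K` be a clique maximising the sum of the degrees of its vertices, and suppose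
`xy` is an edge outside `K`. Unless there is an induced `C₄`, one of `x, y`, say `x`, is adjacent
to every vertex of `K` that `y` is adjacent to. Then `x` has a non-neighbour `z ∈ K`, and without
`2K₂` we get `N(z) ⊆ N(x) ∪ N(y)` with `x ∉ N(z)`, so `deg z < deg x + deg y`. Maximality thus
forbids replacing `z` by `{x, y}`, which yields `a ∈ K` adjacent to `x` but not to `y`, and
forbids replacing `z` by `x`, which yields `w ∈ N(z) \ N(x)`, necessarily adjacent to `y`.
Now `x a w y` is an induced `C₄` or `a x y w z` an induced `C₅`.
-/

section InducedCopies

variable {V : Type*} {G : SimpleGraph V}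

lemma hasInducedTwoKTwo_of_adj {a b c d : V} (hab : G.Adj a b) (hcd : G.Adj c d)
    (hac : ¬ G.Adj a c) (had : ¬ G.Adj a d) (hbc : ¬ G.Adj b c) (hbd : ¬ G.Adj b d) :
    HasInducedTwoKTwo G := by
  have hca : c ≠ a := by rintro rfl; exact had hcd
  have hda : d ≠ a := by rintro rfl; exact hac hcd.symm
  have hcb : c ≠ b := by rintro rfl; exact hbd hcd
  have hdb : d ≠ b := by rintro rfl; exact hbc hcd.symm
  refine ⟨![a, b, c, d], fun i j h => ?_, fun i j => ?_⟩ <;>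
    fin_cases i <;> fin_cases j <;> simp_all [hab.ne, hcd.ne, eq_comm, G.adj_comm]

lemma hasInducedCycle_four_of_adj {a b c d : V} (hab : G.Adj a b) (hbc : G.Adj b c)
    (hcd : G.Adj c d) (hda : G.Adj d a) (hac : ¬ G.Adj a c) (hbd : ¬ G.Adj b d)
    (hne_ac : a ≠ c) (hne_bd : b ≠ d) : HasInducedCycle G 4 := by
  have hcases : ∀ i : ZMod 4, i = 0 ∨ i = 1 ∨ i = 2 ∨ i = 3 := by decide
  refine ⟨![a, b, c, d], fun i j h => ?_, fun i j => ?_⟩ <;>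
    rcases hcases i with rfl | rfl | rfl | rfl <;> rcases hcases j with rfl | rfl | rfl | rfl <;>
    simp_all [hab.ne, hbc.ne, hcd.ne, hda.ne, eq_comm, G.adj_comm] <;> decide

lemma hasInducedCycle_five_of_adj {a b c d e : V} (hab : G.Adj a b) (hbc : G.Adj b c)
    (hcd : G.Adj c d) (hde : G.Adj d e) (hea : G.Adj e a) (hac : ¬ G.Adj a c)
    (hbd : ¬ G.Adj b d) (hce : ¬ G.Adj c e) (hda : ¬ G.Adj d a) (heb : ¬ G.Adj e b) :
    HasInducedCycle G 5 := by
  have hne_ac : a ≠ c := by rintro rfl; exact hda hcd.symm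
  have hne_bd : b ≠ d := by rintro rfl; exact heb hde.symm
  have hne_ce : c ≠ e := by rintro rfl; exact hac hea.symm
  have hne_da : d ≠ a := by rintro rfl; exact hbd hab.symm
  have hne_eb : e ≠ b := by rintro rfl; exact hce hbc.symm
  have hcases : ∀ i : ZMod 5, i = 0 ∨ i = 1 ∨ i = 2 ∨ i = 3 ∨ i = 4 := by decide
  refine ⟨![a, b, c, d, e], fun i j h => ?_, fun i j => ?_⟩ <;>
    rcases hcases i with rfl | rfl | rfl | rfl | rfl <;>
    rcases hcases j with rfl | rfl | rfl | rfl | rfl <;>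
    simp_all [hab.ne, hbc.ne, hcd.ne, hde.ne, hea.ne, eq_comm, G.adj_comm] <;> decide

end InducedCopies

namespace IsSplit

variable {V : Type*} {G : SimpleGraph V}

/-- `c i` records whether `f i` lies on the clique side of the partition. -/
lemma exists_coloring_of_induced {ι : Type*} (hG : IsSplit G) {f : ι → V}
    (hf : Function.Injective f) {P : ι → ι → Prop} (hP : ∀ i j, G.Adj (f i) (f j) ↔ P i j) :
    ∃ c : ι → Bool, ∀ i j, i ≠ j →
      (P i j → c i = true ∨ c j = true) ∧ (¬ P i j → c i = false ∨ c j = false) := by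
  classical
  obtain ⟨K, S, hcover, -, hK, hS⟩ := hG
  have hS_of_notMem : ∀ v, v ∉ K → v ∈ S := fun v hv =>
    (Set.eq_univ_iff_forall.1 hcover v).resolve_left hv
  refine ⟨fun i => decide (f i ∈ K), fun i j hij => ⟨fun h => ?_, fun h => ?_⟩⟩
  · by_contra! hc
    simp only [ne_eq, decide_eq_true_eq] at hc
    exact hS _ (hS_of_notMem _ hc.1) _ (hS_of_notMem _ hc.2) ((hP i j).2 h)
  · by_contra! hc
    simp only [ne_eq, decide_eq_false_iff_not, not_not] at hc
    exact h ((hP i j).1 (hK hc.1 hc.2 (hf.ne hij)))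

lemma not_hasInducedTwoKTwo (hG : IsSplit G) : ¬ HasInducedTwoKTwo G := by
  rintro ⟨f, hf, hP⟩
  exact absurd (hG.exists_coloring_of_induced hf hP) (by decide)

lemma not_hasInducedCycle_four (hG : IsSplit G) : ¬ HasInducedCycle G 4 := by
  rintro ⟨f, hf, hP⟩
  exact absurd (hG.exists_coloring_of_induced hf hP) (by decide)

lemma not_hasInducedCycle_five (hG : IsSplit G) : ¬ HasInducedCycle G 5 := by
  rintro ⟨f, hf, hP⟩
  exact absurd (hG.exists_coloring_of_induced hf hP) (by decide)

end IsSplit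

namespace SimpleGraph

open Finset

variable {V : Type*} [Fintype V] [DecidableEq V] {G : SimpleGraph V} [DecidableRel G.Adj]

lemma neighborFinset_subset_union_of_not_hasInducedTwoKTwo (h2 : ¬ HasInducedTwoKTwo G)
    {x y z : V} (hxy : G.Adj x y) (hxz : ¬ G.Adj x z) (hyz : ¬ G.Adj y z) :
    G.neighborFinset z ⊆ G.neighborFinset x ∪ G.neighborFinset y := by
  intro w hzw
  rw [mem_neighborFinset] at hzw
  by_contra! hw
  simp only [mem_union, mem_neighborFinset, not_or] at hw
  exact h2 (hasInducedTwoKTwo_of_adj hxy hzw hxz hw.1 hyz hw.2)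

lemma degree_lt_add_degree_of_not_hasInducedTwoKTwo (h2 : ¬ HasInducedTwoKTwo G) {x y z : V}
    (hxy : G.Adj x y) (hxz : ¬ G.Adj x z) (hyz : ¬ G.Adj y z) :
    G.degree z < G.degree x + G.degree y := by
  have hssub : G.neighborFinset z ⊂ G.neighborFinset x ∪ G.neighborFinset y := by
    refine ssubset_of_subset_of_ne
      (neighborFinset_subset_union_of_not_hasInducedTwoKTwo h2 hxy hxz hyz) fun h => ?_
    have hx : x ∈ G.neighborFinset z :=
      h ▸ mem_union_right _ ((G.mem_neighborFinset y x).2 hxy.symm)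
    exact hxz ((G.mem_neighborFinset z x).1 hx).symm
  calc G.degree z < #(G.neighborFinset x ∪ G.neighborFinset y) := card_lt_card hssub
    _ ≤ G.degree x + G.degree y := card_union_le _ _

variable (G) in
def IsMaxDegreeSumClique (K : Finset V) : Prop :=
  G.IsClique (K : Set V) ∧
    ∀ K' : Finset V, G.IsClique (K' : Set V) → ∑ v ∈ K', G.degree v ≤ ∑ v ∈ K, G.degree v

variable (G) in
lemma exists_isMaxDegreeSumClique : ∃ K, G.IsMaxDegreeSumClique K := by
  classical
  obtain ⟨K, hK, hmax⟩ := exists_max_image {K : Finset V | G.IsClique (K : Set V)}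
    (fun K => ∑ v ∈ K, G.degree v) ⟨∅, by simp⟩
  exact ⟨K, (mem_filter.1 hK).2, fun K' hK' => hmax K' (by simpa using hK')⟩

namespace IsMaxDegreeSumClique

variable {K : Finset V} (hK : G.IsMaxDegreeSumClique K)
include hK

lemma exists_not_adj {x : V} (hx : x ∉ K) (hdeg : 0 < G.degree x) : ∃ z ∈ K, ¬ G.Adj x z := by
  by_contra! hxK
  have := hK.2 (insert x K) (by
    rw [coe_insert]
    exact hK.1.insert fun v hv _ => hxK v hv)
  rw [sum_insert hx] at this
  omega

lemma sum_degree_le_degree {A : Finset V} {z : V} (hz : z ∈ K) (hA : G.IsClique (A : Set V))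
    (hAK : ∀ a ∈ A, a ∉ K) (hadj : ∀ a ∈ A, ∀ v ∈ K, v ≠ z → G.Adj a v) :
    ∑ a ∈ A, G.degree a ≤ G.degree z := by
  have hdisj : Disjoint A (K.erase z) :=
    Finset.disjoint_left.2 fun _ ha haK => hAK _ ha (mem_of_mem_erase haK)
  have hclique : G.IsClique ((A ∪ K.erase z : Finset V) : Set V) := by
    rw [coe_union, IsClique, Set.pairwise_union]
    refine ⟨hA, hK.1.subset (by simp), fun a ha v hv _ => ?_⟩
    simp only [coe_erase, Set.mem_sdiff, mem_coe, Set.mem_singleton_iff] at hv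
    exact ⟨hadj a ha v hv.1 hv.2, (hadj a ha v hv.1 hv.2).symm⟩
  have := hK.2 _ hclique
  rw [sum_union hdisj, ← sum_erase_add K _ hz] at this
  omega

lemma exists_adj_not_adj {x y z : V} (hz : z ∈ K) (hx : x ∉ K)
    (hxK : ∀ v ∈ K, v ≠ z → G.Adj x v) (hxy : G.Adj x y) (hyz : ¬ G.Adj y z) :
    ∃ w, G.Adj z w ∧ ¬ G.Adj x w := by
  by_contra! hzx
  have hssub : G.neighborFinset z ⊂ G.neighborFinset x := by
    refine Finset.ssubset_iff_subset_ne.2 ⟨fun w hw => ?_, fun h => ?_⟩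
    · simpa using hzx w (by simpa using hw)
    · exact hyz ((G.mem_neighborFinset z y).1 (h ▸ (G.mem_neighborFinset x y).2 hxy)).symm
  have hle := hK.sum_degree_le_degree hz (A := {x}) (by simp) (by simpa using hx)
    (by simpa using hxK)
  have hlt := card_lt_card hssub
  simp only [sum_singleton, card_neighborFinset_eq_degree] at hle hlt
  omega

lemma not_adj_of_neighbors_subset (h2 : ¬ HasInducedTwoKTwo G) (h4 : ¬ HasInducedCycle G 4)
    (h5 : ¬ HasInducedCycle G 5) {x y : V} (hx : x ∉ K) (hy : y ∉ K)
    (hyx : ∀ v ∈ K, G.Adj y v → G.Adj x v) : ¬ G.Adj x y := by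
  intro hxy
  obtain ⟨z, hz, hxz⟩ := hK.exists_not_adj hx ((G.degree_pos_iff_exists_adj x).2 ⟨y, hxy⟩)
  have hyz : ¬ G.Adj y z := fun h => hxz (hyx z hz h)
  have hcover : ∀ w, G.Adj z w → G.Adj x w ∨ G.Adj y w := fun w hw => by
    simpa only [mem_union, mem_neighborFinset] using
      neighborFinset_subset_union_of_not_hasInducedTwoKTwo h2 hxy hxz hyz
        ((G.mem_neighborFinset z w).2 hw)
  have hxK : ∀ v ∈ K, v ≠ z → G.Adj x v := fun v hv hvz =>
    (hcover v (hK.1 hz hv hvz.symm)).elim id (hyx v hv)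
  have hz_lt := degree_lt_add_degree_of_not_hasInducedTwoKTwo h2 hxy hxz hyz
  obtain ⟨a, ha, haz, hya⟩ : ∃ a ∈ K, a ≠ z ∧ ¬ G.Adj y a := by
    by_contra! hyK
    have := hK.sum_degree_le_degree hz (A := {x, y})
      (by rw [coe_pair]; exact isClique_pair.2 fun _ => hxy)
      (by simp [hx, hy]) (by simpa using ⟨hxK, hyK⟩)
    rw [sum_pair hxy.ne] at this
    omega
  obtain ⟨w, hzw, hxw⟩ := hK.exists_adj_not_adj hz hx hxK hxy hyz
  have hyw : G.Adj y w := (hcover w hzw).resolve_left hxw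
  have hxa : G.Adj x a := hxK a ha haz
  have hay : a ≠ y := by rintro rfl; exact hy ha
  have hxw' : x ≠ w := by rintro rfl; exact hxz hzw.symm
  by_cases haw : G.Adj a w
  · exact h4 (hasInducedCycle_four_of_adj hxa haw hyw.symm hxy.symm hxw (fun h => hya h.symm)
      hxw' hay)
  · exact h5 (hasInducedCycle_five_of_adj hxa.symm hxy hyw hzw.symm (hK.1 hz ha haz.symm)
      (fun h => hya h.symm) hxw hyz (fun h => haw h.symm) (fun h => hxz h.symm))

lemma not_adj_of_notMem (h2 : ¬ HasInducedTwoKTwo G) (h4 : ¬ HasInducedCycle G 4)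
    (h5 : ¬ HasInducedCycle G 5) {x y : V} (hx : x ∉ K) (hy : y ∉ K) : ¬ G.Adj x y := by
  intro hxy
  by_cases hyx : ∀ v ∈ K, G.Adj y v → G.Adj x v
  · exact hK.not_adj_of_neighbors_subset h2 h4 h5 hx hy hyx hxy
  by_cases hxy' : ∀ v ∈ K, G.Adj x v → G.Adj y v
  · exact hK.not_adj_of_neighbors_subset h2 h4 h5 hy hx hxy' hxy.symm
  push Not at hyx hxy'
  obtain ⟨b, hb, hyb, hxb⟩ := hyx
  obtain ⟨a, ha, hxa, hya⟩ := hxy'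
  have hab : a ≠ b := fun h => hxb (h ▸ hxa)
  exact h4 (hasInducedCycle_four_of_adj hxa (hK.1 ha hb hab) hyb.symm hxy.symm hxb
    (fun h => hya h.symm) (fun h => hx (h ▸ hb)) (fun h => hy (h ▸ ha)))

end IsMaxDegreeSumClique

end SimpleGraph

theorem split_iff_no_2K2_C4_C5 {V : Type*} [Fintype V] (G : SimpleGraph V) :
    IsSplit G ↔
      ¬ HasInducedTwoKTwo G ∧ ¬ HasInducedCycle G 4 ∧ ¬ HasInducedCycle G 5 := by
  classical
  refine ⟨fun hG => ⟨hG.not_hasInducedTwoKTwo, hG.not_hasInducedCycle_four,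
    hG.not_hasInducedCycle_five⟩, fun ⟨h2, h4, h5⟩ => ?_⟩
  obtain ⟨K, hK⟩ := G.exists_isMaxDegreeSumClique
  exact ⟨K, (K : Set V)ᶜ, Set.union_compl_self _, Set.inter_compl_self _, hK.1,
    fun u hu v hv => hK.not_adj_of_notMem h2 h4 h5 hu hv⟩
end

section
/- The graph W — obtained from a path x_1 x_2 x_3 x_4 x_5 by adding a vertex y adjacent only to x_3 and a vertex r adjacent to all of x_1, x_2, x_3, x_4, x_5 — is not a co-TT graph. -/
/-!
Negating and swapping the endpoints, `(l, r) ↦ (-r, -l)`, maps co-TT representations to co-TT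
representations and exchanges the two ways of separating the non-adjacent vertices `y` and `r`,
so we may assume `r(y) < l(r)`. Whenever `r(a) < l(b)`, every neighbour `w` of `a` and every
neighbour `v` of `b` satisfy `l(w) ≤ r(a) < l(b) ≤ r(v)`, so if `w` and `v` are non-adjacent they
must be separated the other way: `r(w) < l(v)`. Applied to `(y, r)` this gives `r(x₃) < l(x₁)` and
`r(x₃) < l(x₅)`; applied to `(x₃, x₁)` and `(x₃, x₅)` it rules out both ways of separating `x₂`
and `x₄`.
-/

/-- `G` is a co-TT (signed-interval) graph. -/
def IsCoTT {V : Type*} (G : SimpleGraph V) : Prop :=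
  ∃ l r : V → ℝ, ∀ u v : V, u ≠ v → (G.Adj u v ↔ l u ≤ r v ∧ l v ≤ r u)

/-- The graph `W`: path `x₁x₂x₃x₄x₅` (vertices `0,…,4`), vertex `y = 5` adjacent
only to `x₃ = 2`, and vertex `r = 6` adjacent to all of `x₁,…,x₅`. -/
def Wgraph : SimpleGraph (Fin 7) := SimpleGraph.fromRel (fun a b =>
  (a = 0 ∧ b = 1) ∨ (a = 1 ∧ b = 2) ∨ (a = 2 ∧ b = 3) ∨ (a = 3 ∧ b = 4) ∨
  (a = 5 ∧ b = 2) ∨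
  (a = 6 ∧ b = 0) ∨ (a = 6 ∧ b = 1) ∨ (a = 6 ∧ b = 2) ∨ (a = 6 ∧ b = 3) ∨
  (a = 6 ∧ b = 4))

def IsCoTTRep {V : Type*} (G : SimpleGraph V) (l r : V → ℝ) : Prop :=
  ∀ u v : V, u ≠ v → (G.Adj u v ↔ l u ≤ r v ∧ l v ≤ r u)

namespace IsCoTTRep

variable {V : Type*} {G : SimpleGraph V} {l r : V → ℝ} {u v w y z : V}

theorem le_of_adj (h : IsCoTTRep G l r) (huv : G.Adj u v) : l u ≤ r v :=
  ((h u v huv.ne).mp huv).1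

theorem lt_or_lt_of_not_adj (h : IsCoTTRep G l r) (huv : u ≠ v) (hn : ¬ G.Adj u v) :
    r v < l u ∨ r u < l v := by
  rw [h u v huv, not_and_or, not_le, not_le] at hn
  exact hn

theorem lt_of_not_adj (h : IsCoTTRep G l r) (huv : u ≠ v) (hn : ¬ G.Adj u v)
    (hlt : l u < r v) : r u < l v :=
  (h.lt_or_lt_of_not_adj huv hn).resolve_left hlt.not_gt

theorem neg_swap (h : IsCoTTRep G l r) : IsCoTTRep G (-r) (-l) := by
  intro u v huv
  simp only [Pi.neg_apply, neg_le_neg_iff]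
  rw [h u v huv, and_comm]

theorem lt_of_adj_of_adj (h : IsCoTTRep G l r) (hyz : r y < l z) (hwy : G.Adj w y)
    (hzv : G.Adj z v) : l w < r v :=
  calc l w ≤ r y := h.le_of_adj hwy
    _ < l z := hyz
    _ ≤ r v := h.le_of_adj hzv

theorem lt_of_lt_of_not_adj (h : IsCoTTRep G l r) (hyz : r y < l z) (hwy : G.Adj w y)
    (hzv : G.Adj z v) (hwv : w ≠ v) (hn : ¬ G.Adj w v) : r w < l v :=
  h.lt_of_not_adj hwv hn (h.lt_of_adj_of_adj hyz hwy hzv)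

end IsCoTTRep

instance : DecidableRel Wgraph.Adj := fun _ _ =>
  decidable_of_iff' _ (SimpleGraph.fromRel_adj _ _ _)

theorem Wgraph.false_of_isCoTTRep_of_lt {l r : Fin 7 → ℝ} (h : IsCoTTRep Wgraph l r)
    (hyr : r 5 < l 6) : False := by
  have h20 : r 2 < l 0 := h.lt_of_lt_of_not_adj hyr (by decide) (by decide) (by decide) (by decide)
  have h24 : r 2 < l 4 := h.lt_of_lt_of_not_adj hyr (by decide) (by decide) (by decide) (by decide)
  have h31 : l 3 < r 1 := h.lt_of_adj_of_adj h20 (by decide) (by decide)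
  have h13 : r 1 < l 3 := h.lt_of_lt_of_not_adj h24 (by decide) (by decide) (by decide) (by decide)
  exact h31.not_gt h13

theorem Wgraph_not_isCoTT : ¬ IsCoTT Wgraph := by
  rintro ⟨l, r, h⟩
  have h : IsCoTTRep Wgraph l r := h
  rcases h.lt_or_lt_of_not_adj (u := 5) (v := 6) (by decide) (by decide) with h65 | h56
  · exact Wgraph.false_of_isCoTTRep_of_lt h.neg_swap (neg_lt_neg h65)
  · exact Wgraph.false_of_isCoTTRep_of_lt h h56
end
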